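/- For a diagram X over a category C and an object z with no incoming non-identity arrows, the limit of X is isomorphic to the pullback Σ (c_z : X z), Σ (d : lim_{C∖z} X), p(d) = q(c_z), where p is the canonical map from the limit of the restriction of X to C∖z into the matching object M_z, and q : X z → M_z is the canonical map. -/
import Mathlib


open CategoryTheory

universe w v u

variable {C : Type u} [Category.{v} C]

/-- `f` is a non-identity arrow. -/
def NonId {x y : C} (f : x ⟶ y) : Prop := ¬ ∃ p : x = y, f = eqToHom p

/-- The explicit limit of a `Type`-valued functor: natural families. -/
def Lim (X : C ⥤ Type w) : Type (max u w) :=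
  { c : ∀ y : C, X.obj y // ∀ (y y' : C) (f : y ⟶ y'), X.map f (c y) = c y' }

/-- The matching object of `X` at `z`: the limit of `X` restricted to the reduced
coslice `z ⫽ C`. -/
def Match (X : C ⥤ Type w) (z : C) : Type (max u v w) :=
  { c : ∀ (y : C) (f : z ⟶ y), NonId f → X.obj y //
    ∀ (y y' : C) (f : z ⟶ y) (hf : NonId f) (h : y ⟶ y') (hfh : NonId (f ≫ h)),
      X.map h (c y f hf) = c y' (f ≫ h) hfh }

/-- The canonical map `X z → M_z`. -/
def qmap (X : C ⥤ Type w) (z : C) (x : X.obj z) : Match X z :=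
  ⟨fun _ f _ => X.map f x, by
    intro y y' f _ h _
    exact (FunctorToTypes.map_comp_apply X f h x).symm⟩

/-- The explicit limit of `X` restricted to the full subcategory `C ∖ z`. -/
def LimWithout (X : C ⥤ Type w) (z : C) : Type (max u w) :=
  { c : ∀ y : C, y ≠ z → X.obj y //
    ∀ (y y' : C) (hy : y ≠ z) (hy' : y' ≠ z) (f : y ⟶ y'),
      X.map f (c y hy) = c y' hy' }

/-- The canonical map `p : lim_{C∖z} X → M_z`, defined when every arrow into `z`
is an identity. -/
def pmap (X : C ⥤ Type w) (z : C)
    (hmax : ∀ (y : C) (f : y ⟶ z), ∃ p : y = z, f = eqToHom p)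
    (c : LimWithout X z) : Match X z :=
  ⟨fun y f hf => c.1 y (by
      rintro rfl
      obtain ⟨p, hp⟩ := hmax _ f
      exact hf ⟨p, hp⟩),
   by intro y y' f hf h hfh; exact c.2 _ _ _ _ h⟩

section Aux

attribute [local instance] Classical.propDecidable

variable (X : C ⥤ Type w) (z : C)
    (hmax : ∀ (y : C) (f : y ⟶ z), ∃ p : y = z, f = eqToHom p)

def fwd (c : Lim X) :
    Σ cz : X.obj z, { d : LimWithout X z // pmap X z hmax d = qmap X z cz } :=
  ⟨c.1 z, ⟨⟨fun y _ => c.1 y, fun y y' _ _ f => c.2 y y' f⟩, by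
    apply Subtype.ext
    funext y f hf
    exact (c.2 z y f).symm⟩⟩

noncomputable def bwd
    (s : Σ cz : X.obj z, { d : LimWithout X z // pmap X z hmax d = qmap X z cz }) :
    Lim X := by
  refine ⟨fun y => if hy : y = z then X.map (eqToHom hy.symm) s.1 else s.2.1.1 y hy, ?_⟩
  intro y y' f
  by_cases hy : y = z
  · simp only [dif_pos hy]
    by_cases hy' : y' = z
    · simp only [dif_pos hy']
      obtain ⟨p, hp⟩ := hmax y (f ≫ eqToHom hy')
      have hf : f = eqToHom (hy.trans hy'.symm) := by
        calc f = (f ≫ eqToHom hy') ≫ eqToHom hy'.symm := by simp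
          _ = _ := by rw [hp]; simp [eqToHom_trans]
      rw [hf, ← FunctorToTypes.map_comp_apply, eqToHom_trans]
    · simp only [dif_neg hy']
      have hf : NonId (eqToHom hy.symm ≫ f) := fun ⟨p, _⟩ => hy' p.symm
      have key := congrFun (congrFun (congrFun (congrArg Subtype.val s.2.2) y')
        (eqToHom hy.symm ≫ f)) hf
      simp only [pmap, qmap, FunctorToTypes.map_comp_apply] at key
      exact key.symm
  · by_cases hy' : y' = z
    · obtain ⟨p, _⟩ := hmax y (f ≫ eqToHom hy')
      exact absurd p hy
    · simp only [dif_neg hy, dif_neg hy']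
      exact s.2.1.2 y y' hy hy' f

end Aux

/-- If `z` has no incoming non-identity arrows, the limit of `X` is isomorphic to
the pullback of the span `lim_{C∖z} X → M_z ← X z`. -/
theorem limit_decomposes_as_pullback (X : C ⥤ Type w) (z : C)
    (hmax : ∀ (y : C) (f : y ⟶ z), ∃ p : y = z, f = eqToHom p) :
    Nonempty (Lim X ≃
      Σ cz : X.obj z, { d : LimWithout X z // pmap X z hmax d = qmap X z cz }) := by
  classical
  refine ⟨⟨fwd X z hmax, bwd X z hmax, ?_, ?_⟩⟩
  · intro c
    apply Subtype.ext
    funext y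
    by_cases hy : y = z
    · subst hy; simp [bwd, fwd]
    · simp [bwd, fwd, hy]
  · intro s
    obtain ⟨cz, d, h⟩ := s
    have h1 : (fwd X z hmax (bwd X z hmax ⟨cz, d, h⟩)).1 = cz := by
      simp [bwd, fwd]
    refine Sigma.ext h1 ?_
    rw [Subtype.heq_iff_coe_eq]
    · apply Subtype.ext
      funext y hy
      simp [bwd, fwd, hy]
    · intro d'
      rw [h1]
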